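/- arXiv:1202.2603 — 2 statements merged into one kernel-verified Lean document; each statement's English description precedes it below -/
import Mathlib

section
/- Let p be an odd prime and r ≥ 1. The number of residues t ∈ Z/p^rZ such that t² − 4 is a quadratic non-residue modulo p equals p^{r−1}(p−1)/2. -/
/-!
Let `χ` be the quadratic character of a finite field of odd characteristic and `a ≠ 0`.
Substituting `t = a - 2ax` turns `t² - a²` into `-(2a)² x(1 - x)`, so
`∑ₜ χ(t² - a²) = χ(-1) J(χ, χ) = -χ(-1)² = -1`. Summing `1 - χ(t² - a²)`, which is `2` where
`t² - a²` is a non-residue, `1` at the two roots `t = ±a` and `0` elsewhere, gives `2N + 2 = |F| + 1`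
for the number `N` of non-residue values. Over `ℕ` the condition only depends on `t mod p`, so
`[0, p^r)` contains `p^(r-1)` copies of the count over `ZMod p`.
-/

open Finset

section QuadraticChar

variable {F : Type*} [Field F] [Fintype F] [DecidableEq F]

theorem quadraticChar_sum_sq_sub_sq (hF : ringChar F ≠ 2) {a : F} (ha : a ≠ 0) :
    ∑ t : F, quadraticChar F (t ^ 2 - a ^ 2) = -1 := by
  have h2a : -(2 * a) ≠ 0 := neg_ne_zero.mpr (mul_ne_zero (Ring.two_ne_zero hF) ha)
  have hsubst : ∀ x : F, quadraticChar F ((a + -(2 * a) * x) ^ 2 - a ^ 2)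
      = quadraticChar F (-1) * (quadraticChar F x * quadraticChar F (1 - x)) := by
    intro x
    rw [show (a + -(2 * a) * x) ^ 2 - a ^ 2 = (2 * a) ^ 2 * (-1 * (x * (1 - x))) by ring,
      map_mul, quadraticChar_sq_one' (neg_ne_zero.mp h2a), one_mul, map_mul, map_mul]
  calc ∑ t, quadraticChar F (t ^ 2 - a ^ 2)
      = ∑ x, quadraticChar F ((a + -(2 * a) * x) ^ 2 - a ^ 2) :=
        (Fintype.sum_equiv ((Equiv.mulLeft₀ _ h2a).trans (Equiv.addLeft a)) _ _ fun _ => rfl).symm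
    _ = quadraticChar F (-1) * jacobiSum (quadraticChar F) (quadraticChar F)⁻¹ := by
        rw [(quadraticChar_isQuadratic F).inv, jacobiSum, mul_sum]
        simp only [hsubst]
    _ = -1 := by
        rw [jacobiSum_nontrivial_inv (quadraticChar_ne_one hF), mul_neg, ← sq,
          quadraticChar_sq_one (neg_ne_zero.mpr one_ne_zero)]

theorem card_quadraticChar_sq_sub_sq_eq_neg_one_mul_two (hF : ringChar F ≠ 2) {a : F}
    (ha : a ≠ 0) : #{t | quadraticChar F (t ^ 2 - a ^ 2) = -1} * 2 = Fintype.card F - 1 := by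
  have hvalue : ∀ v : F, 1 - quadraticChar F v
      = (if quadraticChar F v = -1 then 1 else 0) * 2 + if v = 0 then 1 else 0 := by
    intro v
    by_cases hv : v = 0
    · simp [hv]
    · rcases quadraticChar_dichotomy hv with h | h <;> simp [h, hv]
  have hroots : #{t : F | t ^ 2 - a ^ 2 = 0} = 2 := by
    have := quadraticChar_card_sqrts hF (a ^ 2)
    rw [quadraticChar_sq_one' ha] at this
    simp only [Set.toFinset_ofPred, sub_eq_zero] at this ⊢
    omega
  have hsum := congrArg (fun f => ∑ t : F, f t) (funext fun t => hvalue (t ^ 2 - a ^ 2))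
  simp only [sum_sub_distrib, sum_add_distrib, ← sum_mul, sum_boole, sum_const, card_univ,
    quadraticChar_sum_sq_sub_sq hF ha, hroots, nsmul_eq_mul, mul_one, Nat.cast_ofNat] at hsum
  have := Fintype.card_pos (α := F)
  omega

end QuadraticChar

theorem Nat.count_mul_of_periodic {P : ℕ → Prop} [DecidablePred P] {a : ℕ}
    (hP : Function.Periodic P a) (m : ℕ) : Nat.count P (m * a) = m * Nat.count P a := by
  induction m with
  | zero => simp
  | succ m ih =>
    have hshift : (fun k => P (m * a + k)) = P := funext fun k => by
      rw [add_comm]; exact hP.nat_mul m k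
    rw [succ_mul, count_add, ih]
    simp only [hshift, succ_mul]

theorem ZMod.count_natCast (n : ℕ) [NeZero n] (Q : ZMod n → Prop) [DecidablePred Q] :
    Nat.count (fun t : ℕ => Q t) n = #{x | Q x} := by
  rw [Nat.count_eq_card_filter_range]
  refine card_nbij' (↑) ZMod.val ?_ ?_ ?_ ?_ <;> intro x hx <;>
    simp_all [ZMod.val_lt, Nat.mod_eq_of_lt]

theorem ZMod.periodic_comp_natCast (n : ℕ) (Q : ZMod n → Prop) :
    Function.Periodic (fun t : ℕ => Q t) n := fun t => by simp

theorem stmt_3 (p : ℕ) [Fact p.Prime] (hp : Odd p) (r : ℕ) (hr : 1 ≤ r) :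
    ((Finset.range (p ^ r)).filter
        fun t : ℕ => legendreSym p ((t : ℤ) ^ 2 - 4) = -1).card * 2
      = p ^ (r - 1) * (p - 1) := by
  have hchar : ringChar (ZMod p) ≠ 2 := by
    rw [ZMod.ringChar_zmod_n]; rintro rfl; exact absurd hp (by decide)
  set Q : ZMod p → Prop := fun x => quadraticChar (ZMod p) (x ^ 2 - 2 ^ 2) = -1
  have hlegendre (t : ℕ) : legendreSym p ((t : ℤ) ^ 2 - 4) = -1 ↔ Q t := by
    rw [legendreSym]; push_cast; norm_num [Q]
  obtain ⟨k, rfl⟩ : ∃ k, r = k + 1 := ⟨r - 1, by omega⟩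
  simp only [hlegendre, ← Nat.count_eq_card_filter_range]
  rw [Nat.add_sub_cancel, pow_succ p k, Nat.count_mul_of_periodic (ZMod.periodic_comp_natCast p Q),
    ZMod.count_natCast p Q, mul_assoc,
    card_quadraticChar_sq_sub_sq_eq_neg_one_mul_two hchar (Ring.two_ne_zero hchar), ZMod.card]
end

section
/- Let p be an odd prime, r ≥ 1, and t an integer such that p^l exactly divides t² − 4 for some odd l with 1 ≤ l < r. Then the number of matrices γ ∈ SL₂(Z/p^rZ) with trace γ ≡ t (mod p^r) equals p^{2r} + p^{2r−1} − p^{2r−(l+1)/2} − p^{2r−(l+3)/2}. -/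
/-!
Writing `γ = !![a, b; c, t - a]`, the matrices of trace `t` correspond to the triples with
`b * c = m(a) := a * (t - a) - 1`. Over `ℤ/p^r` the equation `b * c = p^k * u` with `u` a unit and
`k < r` has `(k + 1) * φ(p^r)` solutions: the pairs with `b` a unit contribute `φ(p^r)`, and the
others are `p` times as many as the solutions of `b' * c' = p^(k-1) * u` modulo `p^(r-1)`, by
induction on `k`. Summing over `a`
therefore amounts to summing `v_p(m(a)) + 1 = #{i ≤ l | p^i ∣ m(a)}`. Since
`-4 * m(a) = (2a - t)^2 - (t^2 - 4)` and `p^l ∥ t^2 - 4` with `l` odd, for `i ≤ l` we have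
`p^i ∣ m(a)` iff `p^⌈i/2⌉ ∣ 2a - t`, which holds for `p^(r - ⌈i/2⌉)` residues `a`, while
`p^(l+1) ∤ m(a)` always. The resulting geometric sums give the formula.
-/

open Finset
open scoped Nat

def Matrix.SpecialLinearGroup.traceFiberEquiv (R : Type*) [CommRing R] (t : R) :
    {γ : Matrix.SpecialLinearGroup (Fin 2) R // Matrix.trace (γ : Matrix (Fin 2) (Fin 2) R) = t} ≃
      Σ a : R, {y : R × R // y.1 * y.2 = a * (t - a) - 1} where
  toFun γ := ⟨γ.1 0 0, (γ.1 0 1, γ.1 1 0), by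
    have hdet := γ.1.det_coe
    have htr := γ.2
    rw [Matrix.det_fin_two] at hdet
    rw [Matrix.trace_fin_two] at htr
    linear_combination -hdet + γ.1 0 0 * htr⟩
  invFun y := ⟨⟨!![y.1, y.2.1.1; y.2.1.2, t - y.1], by
    rw [Matrix.det_fin_two_of]
    linear_combination -y.2.2⟩, by simp [Matrix.trace_fin_two]⟩
  left_inv γ := by
    obtain ⟨γ, htr⟩ := γ
    rw [Matrix.trace_fin_two] at htr
    ext i j
    fin_cases i <;> fin_cases j <;> simp [← htr]
  right_inv y := rfl

theorem Nat.card_subtype_eq_card_and_add_card_and_not {α : Type*} [Finite α] (P Q : α → Prop) :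
    Nat.card {x // P x} = Nat.card {x // P x ∧ Q x} + Nat.card {x // P x ∧ ¬ Q x} := by
  classical
  rw [← Nat.card_sum]
  exact Nat.card_congr ((Equiv.sumCompl fun x : {x // P x} => Q x).symm.trans
    ((Equiv.subtypeSubtypeEquivSubtypeInter P Q).sumCongr
      (Equiv.subtypeSubtypeEquivSubtypeInter P (¬ Q ·))))

theorem card_mul_eq_and_isUnit_fst {M : Type*} [Monoid M] (m : M) :
    Nat.card {x : M × M // x.1 * x.2 = m ∧ IsUnit x.1} = Nat.card Mˣ :=
  Nat.card_congr
    { toFun := fun x => x.2.2.unit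
      invFun := fun v => ⟨(v, ↑v⁻¹ * m), by simp, v.isUnit⟩
      left_inv := by
        rintro ⟨⟨x, y⟩, hxy, hx⟩
        ext
        · rfl
        · simp [← hxy, ← mul_assoc]
      right_inv := fun v => by simp }

namespace ZMod

theorem natCast_mul_eq_natCast_mul_iff {N q n : ℕ} (h : q * n = N) (hq : q ≠ 0) (z z' : ZMod N) :
    (q : ZMod N) * z = q * z' ↔
      castHom (Dvd.intro_left q h) (ZMod n) z = castHom (Dvd.intro_left q h) (ZMod n) z' := by
  rw [← sub_eq_zero, ← mul_sub, ← sub_eq_zero (a := castHom _ _ z), ← map_sub,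
    ← intCast_zmod_cast (z - z')]
  generalize (cast (z - z') : ℤ) = k
  rw [map_intCast, ← Int.cast_natCast, ← Int.cast_mul, intCast_zmod_eq_zero_iff_dvd,
    intCast_zmod_eq_zero_iff_dvd, ← h, Nat.cast_mul]
  exact mul_dvd_mul_iff_left (by exact_mod_cast hq)

theorem natCast_dvd_of_castHom_eq_zero {N q n : ℕ} (h : q * n = N) {z : ZMod N}
    (hz : castHom (Dvd.intro_left q h) (ZMod n) z = 0) : (n : ZMod N) ∣ z := by
  rw [← intCast_zmod_cast z] at hz ⊢
  rw [map_intCast, intCast_zmod_eq_zero_iff_dvd] at hz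
  obtain ⟨k, hk⟩ := hz
  exact ⟨k, by rw [hk]; push_cast; rfl⟩

theorem card_filter_castHom_eq_mul {m n : ℕ} [NeZero n] (h : m ∣ n) (c : ZMod m) :
    #{a : ZMod n | castHom h (ZMod m) a = c} * m = n := by
  have : NeZero m := ⟨fun hm => NeZero.ne n (Nat.eq_zero_of_zero_dvd (hm ▸ h))⟩
  calc #{a : ZMod n | castHom h (ZMod m) a = c} * m
      = ∑ y : ZMod m, #{a : ZMod n | castHom h (ZMod m) a = y} := by
        rw [sum_congr rfl fun y _ => AddMonoidHom.card_fiber_eq_of_mem_range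
          (castHom h (ZMod m)) (castHom_surjective h y) (castHom_surjective h c), sum_const,
          card_univ, ZMod.card, smul_eq_mul, mul_comm]
    _ = n := by rw [← card_eq_sum_card_fiberwise (fun _ _ => mem_univ _), card_univ, ZMod.card]

theorem not_isUnit_iff_natCast_dvd {p r : ℕ} [hp : Fact p.Prime] {x : ZMod (p ^ (r + 1))} :
    ¬ IsUnit x ↔ (p : ZMod (p ^ (r + 1))) ∣ x := by
  refine ⟨fun hx => ?_, fun ⟨y, hy⟩ hx => ?_⟩
  · rw [← natCast_zmod_val x, isUnit_natCast_iff_not_dvd_pow hp.out r.succ_pos, not_not] at hx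
    obtain ⟨k, hk⟩ := hx
    exact ⟨k, by rw [← natCast_zmod_val x, hk, Nat.cast_mul]⟩
  · exact prime_natCast_not_isUnit_pow hp.out r.succ_pos (isUnit_of_mul_isUnit_left (hy ▸ hx))

theorem card_mul_eq_natCast_mul_and_dvd {N q n : ℕ} (h : q * n = N) (hq : q ≠ 0) (hn : n ≠ 0)
    (m : ZMod N) :
    Nat.card {x : ZMod N × ZMod N // x.1 * x.2 = q * m ∧ (q : ZMod N) ∣ x.1} =
      q * Nat.card {y : ZMod n × ZMod n // y.1 * y.2 = castHom (Dvd.intro_left q h) (ZMod n) m} := by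
  set π := castHom (Dvd.intro_left q h) (ZMod n)
  set ρ := castHom (Dvd.intro n h) (ZMod q)
  have hqmul : ∀ z z', (q : ZMod N) * z = q * z' ↔ π z = π z' :=
    natCast_mul_eq_natCast_mul_iff h hq
  have hnmul : ∀ z z', (n : ZMod N) * z = n * z' ↔ ρ z = ρ z' :=
    natCast_mul_eq_natCast_mul_iff ((mul_comm n q).trans h) hn
  set lift := Function.surjInv (castHom_surjective (Dvd.intro_left q h))
  set liftq := Function.surjInv (castHom_surjective (Dvd.intro n h))
  have hπ : ∀ b, π (lift b) = b := Function.surjInv_eq _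
  have hρ : ∀ j, ρ (liftq j) = j := Function.surjInv_eq _
  have hN : (q : ZMod N) * n = 0 := by rw [← Nat.cast_mul, h, natCast_self]
  -- `(j, b, c) ↦ (q b, c + n j)`; by `hqmul` and `hnmul` the choice of lifts does not matter.
  let Φ : ZMod q × {y : ZMod n × ZMod n // y.1 * y.2 = π m} →
      {x : ZMod N × ZMod N // x.1 * x.2 = q * m ∧ (q : ZMod N) ∣ x.1} :=
    fun ⟨j, ⟨(b, c), hbc⟩⟩ => ⟨(q * lift b, lift c + n * liftq j), by
      refine ⟨?_, dvd_mul_right _ _⟩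
      rw [mul_add, show q * lift b * (n * liftq j) = q * n * (lift b * liftq j) by ring, hN,
        zero_mul, add_zero, mul_assoc, hqmul, map_mul, hπ, hπ, hbc]⟩
  have hΦ : Function.Bijective Φ := by
    constructor
    · rintro ⟨j, ⟨⟨b, c⟩, hbc⟩⟩ ⟨j', ⟨⟨b', c'⟩, hbc'⟩⟩ hΦ
      simp only [Φ, Subtype.mk.injEq, Prod.mk.injEq] at hΦ
      obtain ⟨hb, hc⟩ := hΦ
      obtain rfl : b = b' := by simpa only [hπ] using (hqmul _ _).mp hb
      obtain rfl : c = c' := by simpa [hπ] using congrArg π hc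
      obtain rfl : j = j' := by simpa only [hρ] using (hnmul _ _).mp (add_left_cancel hc)
      rfl
    · rintro ⟨⟨x, y⟩, hxy, x₀, hx : x = q * x₀⟩
      subst hx
      obtain ⟨w, hw⟩ : (n : ZMod N) ∣ y - lift (π y) :=
        natCast_dvd_of_castHom_eq_zero h (by rw [map_sub, hπ, sub_self])
      have hx₀y : π x₀ * π y = π m := by
        rw [← map_mul, ← hqmul, ← mul_assoc, hxy]
      refine ⟨(ρ w, ⟨(π x₀, π y), hx₀y⟩), ?_⟩
      simp only [Φ, Subtype.mk.injEq, Prod.mk.injEq]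
      refine ⟨(hqmul _ _).mpr (hπ _), ?_⟩
      rw [(hnmul _ _).mpr (hρ (ρ w)), ← hw, add_sub_cancel]
  rw [← Nat.card_congr (Equiv.ofBijective Φ hΦ), Nat.card_prod, Nat.card_zmod]

theorem card_mul_eq_pow_mul_of_isUnit {p : ℕ} [hp : Fact p.Prime] {k r : ℕ} (hkr : k < r)
    {u : ZMod (p ^ r)} (hu : IsUnit u) :
    Nat.card {x : ZMod (p ^ r) × ZMod (p ^ r) // x.1 * x.2 = p ^ k * u} = (k + 1) * φ (p ^ r) := by
  induction k generalizing r with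
  | zero =>
    have hunit : ∀ x : ZMod (p ^ r) × ZMod (p ^ r), x.1 * x.2 = p ^ 0 * u → IsUnit x.1 :=
      fun x hx => isUnit_of_mul_isUnit_left (by rw [hx, pow_zero, one_mul]; exact hu)
    rw [Nat.card_congr (Equiv.subtypeEquivRight fun x => (and_iff_left_of_imp (hunit x)).symm),
      card_mul_eq_and_isUnit_fst, Nat.card_eq_fintype_card, card_units_eq_totient, zero_add,
      one_mul]
  | succ k ih =>
    obtain ⟨r, rfl⟩ : ∃ r', r = r' + 1 := ⟨r - 1, by omega⟩
    have hpr : p * p ^ r = p ^ (r + 1) := (pow_succ' p r).symm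
    have hnonunit : Nat.card {x : ZMod (p ^ (r + 1)) × ZMod (p ^ (r + 1)) //
        x.1 * x.2 = p ^ (k + 1) * u ∧ ¬ IsUnit x.1} = p * ((k + 1) * φ (p ^ r)) := by
      rw [← ih (by omega) (hu.map (castHom (Dvd.intro_left p hpr) (ZMod (p ^ r)))),
        ← map_natCast (castHom (Dvd.intro_left p hpr) (ZMod (p ^ r))), ← map_pow, ← map_mul,
        ← card_mul_eq_natCast_mul_and_dvd hpr hp.out.ne_zero (pow_ne_zero _ hp.out.ne_zero)]
      refine Nat.card_congr (Equiv.subtypeEquivRight fun x => ?_)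
      rw [not_isUnit_iff_natCast_dvd, ← mul_assoc, ← pow_succ' (p : ZMod (p ^ (r + 1)))]
    rw [Nat.card_subtype_eq_card_and_add_card_and_not _ fun x => IsUnit x.1,
      card_mul_eq_and_isUnit_fst, Nat.card_eq_fintype_card, card_units_eq_totient, hnonunit,
      ← hpr, Nat.totient_mul_of_prime_of_dvd hp.out (dvd_pow_self p (by omega))]
    ring

theorem card_mul_eq_intCast {p : ℕ} [hp : Fact p.Prime] {r : ℕ} {m : ℤ} (hm : m ≠ 0)
    (hmr : padicValInt p m < r) :
    Nat.card {x : ZMod (p ^ r) × ZMod (p ^ r) // x.1 * x.2 = m} =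
      (padicValInt p m + 1) * φ (p ^ r) := by
  obtain ⟨u, hu⟩ := padicValInt_dvd (p := p) m
  have hpu : ¬ (p : ℤ) ∣ u := fun ⟨u', hu'⟩ => by
    have := (padicValInt_dvd_iff (p := p) (padicValInt p m + 1) m).mp
      ⟨u', by rw [pow_succ, mul_assoc, ← hu', ← hu]⟩
    omega
  have hunit : IsUnit (u : ZMod (p ^ r)) := by
    rw [coe_int_isUnit_iff_isCoprime, Nat.cast_pow]
    exact ((Prime.coprime_iff_not_dvd (Nat.prime_iff_prime_int.mp hp.out)).mpr hpu).pow_left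
  rw [show (m : ZMod (p ^ r)) = p ^ padicValInt p m * u by
    exact_mod_cast congrArg (Int.cast : ℤ → ZMod (p ^ r)) hu]
  exact card_mul_eq_pow_mul_of_isUnit hmr hunit

theorem card_filter_pow_dvd_two_mul_val_sub {p : ℕ} [Fact p.Prime] (hp : Odd p) {j r : ℕ}
    (hjr : j ≤ r) (t : ℤ) : #{a : ZMod (p ^ r) | (p : ℤ) ^ j ∣ 2 * a.val - t} = p ^ (r - j) := by
  have h2 : IsUnit (2 : ZMod (p ^ j)) := by
    rw [← Nat.cast_ofNat, isUnit_iff_coprime, Nat.coprime_two_left]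
    exact hp.pow
  have hfilter : ∀ a : ZMod (p ^ r), (p : ℤ) ^ j ∣ 2 * a.val - t ↔
      castHom (pow_dvd_pow p hjr) (ZMod (p ^ j)) a = ↑h2.unit⁻¹ * t := by
    intro a
    rw [← Nat.cast_pow, ← intCast_zmod_eq_zero_iff_dvd, castHom_apply,
      h2.unit.eq_inv_mul_iff_mul_eq, IsUnit.unit_spec, ← sub_eq_zero]
    push_cast
    rw [sub_zero, sub_eq_zero, natCast_val]
  rw [filter_congr fun a _ => hfilter a]
  refine Nat.eq_of_mul_eq_mul_right (pow_pos (Fact.out : p.Prime).pos j) ?_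
  rw [card_filter_castHom_eq_mul, pow_sub_mul_pow p hjr]

end ZMod

theorem Int.pow_dvd_sq_iff {p : ℕ} [Fact p.Prime] (i : ℕ) (w : ℤ) :
    (p : ℤ) ^ i ∣ w ^ 2 ↔ (p : ℤ) ^ ((i + 1) / 2) ∣ w := by
  rcases eq_or_ne w 0 with rfl | hw
  · simp
  rw [padicValInt_dvd_iff, padicValInt_dvd_iff, sq, padicValInt.mul hw hw]
  simp only [mul_self_eq_zero, hw, false_or]
  omega

theorem Int.pow_dvd_sq_sub_iff {p : ℕ} [Fact p.Prime] {l i : ℕ} {D : ℤ} (hD : (p : ℤ) ^ l ∣ D)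
    (hi : i ≤ l) (w : ℤ) : (p : ℤ) ^ i ∣ w ^ 2 - D ↔ (p : ℤ) ^ ((i + 1) / 2) ∣ w := by
  rw [dvd_sub_left ((pow_dvd_pow _ hi).trans hD), Int.pow_dvd_sq_iff]

theorem Int.not_pow_succ_dvd_sq_sub {p : ℕ} [Fact p.Prime] {l : ℕ} (hl : Odd l) {D : ℤ}
    (hD : (p : ℤ) ^ l ∣ D) (hD' : ¬ (p : ℤ) ^ (l + 1) ∣ D) (w : ℤ) :
    ¬ (p : ℤ) ^ (l + 1) ∣ w ^ 2 - D := by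
  intro h
  have hw : (p : ℤ) ^ ((l + 1) / 2) ∣ w :=
    (Int.pow_dvd_sq_sub_iff hD le_rfl w).mp ((pow_dvd_pow _ l.le_succ).trans h)
  have hw2 : (p : ℤ) ^ (l + 1) ∣ w ^ 2 := by
    rw [Int.pow_dvd_sq_iff]
    obtain ⟨k, rfl⟩ := hl
    rwa [show (2 * k + 1 + 1 + 1) / 2 = (2 * k + 1 + 1) / 2 by omega]
  exact hD' ((dvd_sub_right hw2).mp h)

theorem Int.pow_dvd_mul_sub_sub_one_iff {p : ℕ} (hp : Odd p) (i : ℕ) (a t : ℤ) :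
    (p : ℤ) ^ i ∣ a * (t - a) - 1 ↔ (p : ℤ) ^ i ∣ (2 * a - t) ^ 2 - (t ^ 2 - 4) := by
  have h4 : IsCoprime ((p : ℤ) ^ i) (-4) := by
    refine IsCoprime.pow_left (IsCoprime.neg_right ?_)
    exact_mod_cast Nat.isCoprime_iff_coprime.mpr
      (Nat.Coprime.pow_right 2 (Nat.coprime_two_right.mpr hp))
  rw [show (2 * a - t) ^ 2 - (t ^ 2 - 4) = -4 * (a * (t - a) - 1) by ring]
  exact ⟨fun h => h.mul_left _, h4.dvd_of_dvd_mul_left⟩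

theorem card_filter_range_pow_dvd_eq {p : ℕ} [Fact p.Prime] {l : ℕ} {m : ℤ}
    (hm : ¬ (p : ℤ) ^ (l + 1) ∣ m) :
    #{i ∈ range (l + 1) | (p : ℤ) ^ i ∣ m} = padicValInt p m + 1 := by
  rw [padicValInt_dvd_iff, not_or] at hm
  rw [← card_range (padicValInt p m + 1)]
  congr 1
  ext i
  simp only [mem_filter, mem_range, padicValInt_dvd_iff, hm.1, false_or]
  omega

namespace ZMod

variable {p : ℕ} [Fact p.Prime] {l r : ℕ} {t : ℤ}

theorem card_filter_pow_dvd_val_mul_sub_sub_one (hp : Odd p) {i : ℕ} (hil : i ≤ l) (hir : i ≤ r)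
    (hdvd : (p : ℤ) ^ l ∣ t ^ 2 - 4) :
    #{a : ZMod (p ^ r) | (p : ℤ) ^ i ∣ a.val * (t - a.val) - 1} = p ^ (r - (i + 1) / 2) := by
  simp_rw [Int.pow_dvd_mul_sub_sub_one_iff hp, Int.pow_dvd_sq_sub_iff hdvd hil]
  exact card_filter_pow_dvd_two_mul_val_sub hp (by omega) t

theorem card_mul_eq_mul_sub_sub_one (hp : Odd p) (hl : Odd l) (hlr : l < r)
    (hdvd : (p : ℤ) ^ l ∣ t ^ 2 - 4) (hndvd : ¬ (p : ℤ) ^ (l + 1) ∣ t ^ 2 - 4) (a : ZMod (p ^ r)) :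
    Nat.card {y : ZMod (p ^ r) × ZMod (p ^ r) // y.1 * y.2 = a * (t - a) - 1} =
      #{i ∈ range (l + 1) | (p : ℤ) ^ i ∣ a.val * (t - a.val) - 1} * φ (p ^ r) := by
  have hm : ¬ (p : ℤ) ^ (l + 1) ∣ a.val * (t - a.val) - 1 := by
    rw [Int.pow_dvd_mul_sub_sub_one_iff hp]
    exact Int.not_pow_succ_dvd_sq_sub hl hdvd hndvd _
  have hval := (padicValInt_dvd_iff (l + 1) _).not.mp hm
  rw [not_or] at hval
  rw [card_filter_range_pow_dvd_eq hm, ← card_mul_eq_intCast hval.1 (by omega)]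
  simp

end ZMod

theorem sum_range_two_mul_pow_sub_div_two {R : Type*} [CommSemiring R] (x : R) (s : ℕ) :
    ∑ i ∈ range (2 * s), x ^ (s - (i + 1) / 2) = (x + 1) * ∑ j ∈ range s, x ^ j := by
  induction s with
  | zero => simp
  | succ s ih =>
    have hshift : ∀ i ∈ range (2 * s), x ^ (s + 1 - (i + 1) / 2) = x * x ^ (s - (i + 1) / 2) := by
      intro i hi
      rw [← pow_succ']
      congr 1
      have := mem_range.mp hi
      omega
    rw [show 2 * (s + 1) = 2 * s + 1 + 1 by ring, sum_range_succ, sum_range_succ,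
      sum_congr rfl hshift, ← mul_sum, ih, sum_range_succ',
      show s + 1 - (2 * s + 1 + 1) / 2 = 0 by omega, show s + 1 - (2 * s + 1) / 2 = 1 by omega]
    simp only [pow_succ', ← mul_sum]
    ring

theorem Nat.sum_range_pow_mul_totient {p : ℕ} (hp : p.Prime) {r s : ℕ} (hsr : 2 * s ≤ r) :
    (∑ i ∈ range (2 * s), p ^ (r - (i + 1) / 2)) * φ (p ^ r) =
      p ^ (2 * r) + p ^ (2 * r - 1) - p ^ (2 * r - s) - p ^ (2 * r - (s + 1)) := by
  rcases s.eq_zero_or_pos with rfl | hs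
  · simp
  obtain ⟨s, rfl⟩ : ∃ s', s = s' + 1 := ⟨s - 1, by omega⟩
  obtain ⟨d, rfl⟩ : ∃ d, r = s + 1 + d := ⟨r - (s + 1), by omega⟩
  have hsum : ∑ i ∈ range (2 * (s + 1)), p ^ (s + 1 + d - (i + 1) / 2) =
      p ^ d * ((p + 1) * ∑ j ∈ range (s + 1), p ^ j) := by
    rw [← sum_range_two_mul_pow_sub_div_two, mul_sum]
    refine sum_congr rfl fun i hi => ?_
    rw [← pow_add]
    congr 1
    have := mem_range.mp hi
    omega
  have hgeom : p ^ d * ((p + 1) * ∑ j ∈ range (s + 1), p ^ j) * (p ^ (s + d) * (p - 1)) +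
      p ^ (s + 1 + 2 * d) + p ^ (s + 2 * d) = p ^ (2 * s + 2 + 2 * d) + p ^ (2 * s + 1 + 2 * d) := by
    zify [hp.one_le]
    linear_combination ((p : ℤ) ^ d * (p + 1) * p ^ (s + d)) * geom_sum_mul (p : ℤ) (s + 1)
  rw [hsum, show s + 1 + d = s + d + 1 by ring, totient_prime_pow_succ hp,
    show 2 * (s + d + 1) = 2 * s + 2 + 2 * d by ring,
    show 2 * s + 2 + 2 * d - 1 = 2 * s + 1 + 2 * d by omega,
    show 2 * s + 2 + 2 * d - (s + 1) = s + 1 + 2 * d by omega,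
    show 2 * s + 2 + 2 * d - (s + 1 + 1) = s + 2 * d by omega]
  omega

theorem stmt_9_general (p : ℕ) [Fact p.Prime] (hp : Odd p) (r l : ℕ) (hlr : l < r)
    (hlodd : Odd l) (t : ℤ)
    (hdvd : (p : ℤ) ^ l ∣ t ^ 2 - 4) (hndvd : ¬ (p : ℤ) ^ (l + 1) ∣ t ^ 2 - 4) :
    Nat.card {γ : Matrix.SpecialLinearGroup (Fin 2) (ZMod (p ^ r)) //
        Matrix.trace (γ : Matrix (Fin 2) (Fin 2) (ZMod (p ^ r))) = (t : ZMod (p ^ r))}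
      = p ^ (2 * r) + p ^ (2 * r - 1) - p ^ (2 * r - (l + 1) / 2) - p ^ (2 * r - (l + 3) / 2) := by
  have hcount : ∀ i ∈ range (l + 1),
      #{a : ZMod (p ^ r) | (p : ℤ) ^ i ∣ a.val * (t - a.val) - 1} = p ^ (r - (i + 1) / 2) :=
    fun i hi => ZMod.card_filter_pow_dvd_val_mul_sub_sub_one hp
      (Nat.lt_succ_iff.mp (mem_range.mp hi)) (by have := mem_range.mp hi; omega) hdvd
  have hdouble := sum_card_bipartiteAbove_eq_sum_card_bipartiteBelow
    (fun (a : ZMod (p ^ r)) i => (p : ℤ) ^ i ∣ a.val * (t - a.val) - 1) (s := univ)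
    (t := range (l + 1))
  simp only [bipartiteAbove, bipartiteBelow] at hdouble
  rw [Nat.card_congr (Matrix.SpecialLinearGroup.traceFiberEquiv _ _), Nat.card_sigma]
  simp_rw [ZMod.card_mul_eq_mul_sub_sub_one hp hlodd hlr hdvd hndvd]
  rw [← sum_mul, hdouble, sum_congr rfl hcount]
  obtain ⟨s, rfl⟩ := hlodd
  rw [show 2 * s + 1 + 1 = 2 * (s + 1) by ring, show 2 * (s + 1) / 2 = s + 1 by omega,
    show (2 * s + 1 + 3) / 2 = s + 1 + 1 by omega]
  exact Nat.sum_range_pow_mul_totient Fact.out (by omega)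

theorem stmt_9 (p : ℕ) [Fact p.Prime] (hp : Odd p) (r l : ℕ) (hl : 1 ≤ l) (hlr : l < r)
    (hlodd : Odd l) (t : ℤ)
    (hdvd : (p : ℤ) ^ l ∣ t ^ 2 - 4) (hndvd : ¬ (p : ℤ) ^ (l + 1) ∣ t ^ 2 - 4) :
    Nat.card {γ : Matrix.SpecialLinearGroup (Fin 2) (ZMod (p ^ r)) //
        Matrix.trace (γ : Matrix (Fin 2) (Fin 2) (ZMod (p ^ r))) = (t : ZMod (p ^ r))}
      = p ^ (2 * r) + p ^ (2 * r - 1) - p ^ (2 * r - (l + 1) / 2) - p ^ (2 * r - (l + 3) / 2) :=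
  stmt_9_general p hp r l hlr hlodd t hdvd hndvd
end
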